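/- (Abstract saddle point well-posedness) Let V and M be Hilbert spaces, a : V×V → ℝ a bounded bilinear form that is coercive on the kernel K = {v ∈ V : b(v,μ) = 0 for all μ ∈ M}, and b : V×M → ℝ a bounded bilinear form satisfying the inf-sup condition: there is β > 0 with sup_{v≠0} b(v,μ)/‖v‖_V ≥ β ‖μ‖_M for all μ ∈ M. Then for every f ∈ V' the saddle point problem a(u,v) + b(v,λ) = f(v) for all v ∈ V, b(u,μ) = 0 for all μ ∈ M, has a unique solution (u,λ) ∈ V×M. -/

import Mathlib

/-!
On the kernel `K` of `b` (a closed subspace), coercivity and Lax–Milgram give `u ∈ K` with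
`a(u, v) = f(v)` for `v ∈ K`. The residual `f - a(u, ·)` then vanishes on `K = (range B)ᗮ`, where
`B μ` is the Riesz representative of `b(·, μ)`. The inf-sup condition says `‖B μ‖ ≥ β‖μ‖`, so `B`
has closed range, `Kᗮ = range B`, and the residual is `b(·, λ)` for some `λ`.
Uniqueness: for `f = 0`, testing with `v = u` gives `a(u, u) = 0`, hence `u = 0` by coercivity,
and then `b(·, λ) = 0` forces `λ = 0` by the inf-sup condition.
-/

open InnerProductSpace RealInnerProductSpace

theorem ContinuousLinearMap.sSup_div_norm_le_opNorm {E : Type*} [SeminormedAddCommGroup E]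
    [NormedSpace ℝ E] (ℓ : StrongDual ℝ E) :
    sSup {c : ℝ | ∃ v : E, v ≠ 0 ∧ c = ℓ v / ‖v‖} ≤ ‖ℓ‖ := by
  refine Real.sSup_le ?_ (norm_nonneg ℓ)
  rintro _ ⟨v, -, rfl⟩
  exact div_le_of_le_mul₀ (norm_nonneg v) (norm_nonneg ℓ)
    ((le_abs_self _).trans (ℓ.le_opNorm v))

theorem ContinuousLinearMap.isClosed_range_of_mul_norm_le {E F : Type*}
    [NormedAddCommGroup E] [NormedSpace ℝ E] [CompleteSpace E]
    [NormedAddCommGroup F] [NormedSpace ℝ F] (T : E →L[ℝ] F) {β : ℝ} (hβ : 0 < β)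
    (hT : ∀ x, β * ‖x‖ ≤ ‖T x‖) : IsClosed (T.range : Set F) := by
  have hanti : AntilipschitzWith (Real.toNNReal β⁻¹) T := T.antilipschitz_of_bound fun x => by
    rw [Real.coe_toNNReal _ (inv_nonneg.2 hβ.le), ← div_eq_inv_mul, le_div_iff₀' hβ]
    exact hT x
  simpa [LinearMap.coe_range] using hanti.isClosed_range T.uniformContinuous

theorem IsCoercive.exists_forall_apply_eq {E : Type*} [NormedAddCommGroup E]
    [InnerProductSpace ℝ E] [CompleteSpace E] {B : E →L[ℝ] E →L[ℝ] ℝ} (hB : IsCoercive B)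
    (f : StrongDual ℝ E) : ∃ u, ∀ v, B u v = f v := by
  refine ⟨hB.continuousLinearEquivOfBilin.symm ((toDual ℝ E).symm f), fun v => ?_⟩
  rw [← hB.continuousLinearEquivOfBilin_apply, ContinuousLinearEquiv.apply_symm_apply,
    toDual_symm_apply]

theorem exists_mem_forall_apply_eq_of_coercive_on {E : Type*} [NormedAddCommGroup E]
    [InnerProductSpace ℝ E] (a : E →L[ℝ] E →L[ℝ] ℝ) (K : Submodule ℝ E) [CompleteSpace K]
    {α : ℝ} (hα : 0 < α) (hcoercive : ∀ v ∈ K, α * ‖v‖ ^ 2 ≤ a v v) (f : StrongDual ℝ E) :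
    ∃ u ∈ K, ∀ v ∈ K, a u v = f v := by
  have hK : IsCoercive (a.bilinearComp K.subtypeL K.subtypeL) :=
    ⟨α, hα, fun u => by simpa [mul_assoc, sq] using hcoercive u u.2⟩
  obtain ⟨u, hu⟩ := hK.exists_forall_apply_eq (f ∘L K.subtypeL)
  exact ⟨u, u.2, fun v hv => hu ⟨v, hv⟩⟩

namespace SaddlePoint

variable {V M : Type*} [NormedAddCommGroup V] [InnerProductSpace ℝ V]
  [NormedAddCommGroup M] [InnerProductSpace ℝ M]

section Riesz

variable [CompleteSpace V]

noncomputable def flipRiesz (b : V →L[ℝ] M →L[ℝ] ℝ) : M →L[ℝ] V :=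
  (toDual ℝ V).symm.toContinuousLinearEquiv.toContinuousLinearMap ∘L b.flip

variable (b : V →L[ℝ] M →L[ℝ] ℝ)

theorem toDual_flipRiesz_apply (μ : M) : toDual ℝ V (flipRiesz b μ) = b.flip μ := by
  simp [flipRiesz]

theorem inner_flipRiesz_apply (μ : M) (v : V) : ⟪flipRiesz b μ, v⟫ = b v μ := by
  simp [flipRiesz, toDual_symm_apply]

theorem norm_flipRiesz_apply (μ : M) : ‖flipRiesz b μ‖ = ‖b.flip μ‖ := by
  rw [← toDual_flipRiesz_apply, LinearIsometryEquiv.norm_map]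

theorem ker_eq_orthogonal_range_flipRiesz : b.ker = (flipRiesz b).rangeᗮ := by
  ext v
  simp [Submodule.mem_orthogonal, inner_flipRiesz_apply, ContinuousLinearMap.ext_iff]

theorem exists_flip_eq_of_ker_le [CompleteSpace M] {β : ℝ} (hβ : 0 < β)
    (hinfsup : ∀ μ, β * ‖μ‖ ≤ ‖b.flip μ‖) {g : StrongDual ℝ V} (hg : b.ker ≤ g.ker) :
    ∃ μ, b.flip μ = g := by
  have hclosed : IsClosed ((flipRiesz b).range : Set V) :=
    (flipRiesz b).isClosed_range_of_mul_norm_le hβ fun μ => by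
      rw [norm_flipRiesz_apply]; exact hinfsup μ
  have hg' : (toDual ℝ V).symm g ∈ (flipRiesz b).range := by
    rw [← hclosed.submodule_topologicalClosure_eq, ← Submodule.orthogonal_orthogonal_eq_closure,
      ← ker_eq_orthogonal_range_flipRiesz, Submodule.mem_orthogonal']
    intro v hv
    rw [toDual_symm_apply]
    exact hg hv
  obtain ⟨μ, hμ⟩ := hg'
  refine ⟨μ, ?_⟩
  rw [← toDual_flipRiesz_apply, ← LinearIsometryEquiv.apply_symm_apply (toDual ℝ V) g, ← hμ]
  rfl

end Riesz

variable (a : V →L[ℝ] V →L[ℝ] ℝ) (b : V →L[ℝ] M →L[ℝ] ℝ) {α β : ℝ}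

def IsSolution (f : StrongDual ℝ V) (p : V × M) : Prop :=
  (∀ v, a p.1 v + b v p.2 = f v) ∧ ∀ μ, b p.1 μ = 0

variable {a b}

theorem IsSolution.sub {f g : StrongDual ℝ V} {p q : V × M} (hp : IsSolution a b f p)
    (hq : IsSolution a b g q) : IsSolution a b (f - g) (p - q) := by
  refine ⟨fun v => ?_, fun μ => ?_⟩
  · simp only [Prod.fst_sub, Prod.snd_sub, map_sub, sub_apply, ← hp.1 v, ← hq.1 v]
    ring
  · simp [hp.2 μ, hq.2 μ]

theorem IsSolution.eq_zero (hα : 0 < α)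
    (hcoercive : ∀ v, (∀ μ, b v μ = 0) → α * ‖v‖ ^ 2 ≤ a v v) (hβ : 0 < β)
    (hinfsup : ∀ μ, β * ‖μ‖ ≤ ‖b.flip μ‖) {p : V × M} (hp : IsSolution a b 0 p) : p = 0 := by
  obtain ⟨u, μ⟩ := p
  obtain ⟨hu, hb⟩ := hp
  have hu0 : u = 0 := by
    have h := hcoercive u hb
    rw [← add_zero (a u u), ← hb μ, hu u] at h
    exact norm_eq_zero.1 ((sq_nonpos_iff _).1 (nonpos_of_mul_nonpos_right h hα))
  have hflip : b.flip μ = 0 := by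
    ext v
    simpa [hu0] using hu v
  have hμ := hinfsup μ
  rw [hflip, norm_zero] at hμ
  simp [hu0, norm_le_zero_iff.1 (nonpos_of_mul_nonpos_right hμ hβ)]

theorem exists_isSolution [CompleteSpace V] [CompleteSpace M] (hα : 0 < α)
    (hcoercive : ∀ v, (∀ μ, b v μ = 0) → α * ‖v‖ ^ 2 ≤ a v v) (hβ : 0 < β)
    (hinfsup : ∀ μ, β * ‖μ‖ ≤ ‖b.flip μ‖) (f : StrongDual ℝ V) :
    ∃ p, IsSolution a b f p := by
  have hker (v : V) : v ∈ b.ker ↔ ∀ μ, b v μ = 0 := by simp [ContinuousLinearMap.ext_iff]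
  have : CompleteSpace b.ker := b.isClosed_ker.completeSpace_coe
  obtain ⟨u, huK, hu⟩ := exists_mem_forall_apply_eq_of_coercive_on a b.ker hα
    (fun v hv => hcoercive v ((hker v).1 hv)) f
  obtain ⟨μ, hμ⟩ := exists_flip_eq_of_ker_le b hβ hinfsup (g := f - a u) fun v hv => by
    simp [hu v hv]
  refine ⟨(u, μ), fun v => ?_, (hker u).1 huK⟩
  have := congr($hμ v)
  simp only [ContinuousLinearMap.flip_apply, sub_apply] at this
  linarith

theorem existsUnique_isSolution [CompleteSpace V] [CompleteSpace M] (hα : 0 < α)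
    (hcoercive : ∀ v, (∀ μ, b v μ = 0) → α * ‖v‖ ^ 2 ≤ a v v) (hβ : 0 < β)
    (hinfsup : ∀ μ, β * ‖μ‖ ≤ ‖b.flip μ‖) (f : StrongDual ℝ V) :
    ∃! p, IsSolution a b f p := by
  obtain ⟨p, hp⟩ := exists_isSolution hα hcoercive hβ hinfsup f
  refine ⟨p, hp, fun q hq => sub_eq_zero.1 (IsSolution.eq_zero hα hcoercive hβ hinfsup ?_)⟩
  simpa using hq.sub hp

end SaddlePoint

/-- Abstract saddle point well-posedness (Babuška–Brezzi): if `a` is bounded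
and coercive on the kernel `K = {v | b(v,μ) = 0 ∀μ}`, and `b` is bounded and
satisfies the inf-sup condition `sup_{v≠0} b(v,μ)/‖v‖ ≥ β‖μ‖`, then for every
bounded linear functional `f` the saddle point problem has a unique solution
`(u,λ)`. -/
theorem abstract_saddle_point_wellposed
    (V M : Type*) [NormedAddCommGroup V] [InnerProductSpace ℝ V]
    [CompleteSpace V] [NormedAddCommGroup M] [InnerProductSpace ℝ M]
    [CompleteSpace M]
    (a : V →ₗ[ℝ] V →ₗ[ℝ] ℝ) (b : V →ₗ[ℝ] M →ₗ[ℝ] ℝ)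
    (Ca Cb αc βc : ℝ)
    (ha_bdd : ∀ u v : V, |a u v| ≤ Ca * ‖u‖ * ‖v‖)
    (hb_bdd : ∀ (v : V) (μ : M), |b v μ| ≤ Cb * ‖v‖ * ‖μ‖)
    (hαc : 0 < αc)
    (hcoercive : ∀ v : V, (∀ μ : M, b v μ = 0) → αc * ‖v‖ ^ 2 ≤ a v v)
    (hβc : 0 < βc)
    (hinfsup : ∀ μ : M,
      βc * ‖μ‖ ≤ sSup {c : ℝ | ∃ v : V, v ≠ 0 ∧ c = b v μ / ‖v‖}) :
    ∀ f : V →L[ℝ] ℝ, ∃! p : V × M,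
      (∀ v : V, a p.1 v + b v p.2 = f v) ∧ (∀ μ : M, b p.1 μ = 0) := by
  let a' := a.mkContinuous₂ Ca ha_bdd
  let b' := b.mkContinuous₂ Cb hb_bdd
  exact SaddlePoint.existsUnique_isSolution (a := a') (b := b') hαc hcoercive hβc
    fun μ => (hinfsup μ).trans (b'.flip μ).sSup_div_norm_le_opNorm
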